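/- arXiv:1208.5474 — 2 statements merged into one kernel-verified Lean document; each statement's English description precedes it below -/
import Mathlib

section
/- For all real numbers a, b, c, one has 2(3/2·a − 2b + 1/2·c)·a ≥ 1/2·(a² + (2a−b)²) − 1/2·(b² + (2b−c)²). -/
theorem stmt_3 (a b c : ℝ) :
    2 * (3/2 * a - 2 * b + 1/2 * c) * a ≥
      1/2 * (a^2 + (2*a - b)^2) - 1/2 * (b^2 + (2*b - c)^2) := by
  nlinarith [sq_nonneg (a - 2*b + c)]
end

section
/- Let N ≥ 1, h > 0 with Nh = 1, and let V^{k+1}, V^k ∈ ℝ^N be N-periodic vectors. Define F_d[U] = (1/2)·Σ_{i=0}^{N−1} ((δ⁺_i V)² + (δ⁻_i V)²)·h where U_i = V_i². If V_i^{k+1} + V_i^k ≠ 0 for all i, then F_d[U^{k+1}] − F_d[U^k] = −Σ_{i=0}^{N−1} [δ^{⟨2⟩}_i(V^{k+1} + V^k)/(V_i^{k+1} + V_i^k)]·(U_i^{k+1} − U_i^k)·h, where δ^{⟨2⟩}_i = δ⁺_i δ⁻_i. -/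
/-!
Write `W = V' + V` and `D = V' - V`. Each difference of squares factors, `(δ⁺V')² - (δ⁺V)² = δ⁺W δ⁺D`,
and likewise for `δ⁻`, while `(V')² - V² = W D`; dividing by `W` in the right-hand side leaves
`-Σ δ⟨2⟩W · D h`. The identity is thus discrete summation by parts, `Σ δ⁺W δ⁺D = -Σ δ⟨2⟩W · D`
(and the same for `δ⁻`), where periodicity kills the boundary terms. The mesh size enters only as
an overall factor `1/h`.
-/

open Finset Function

section SummationByParts

variable {R : Type*} {N : ℕ}

theorem Function.Periodic.sum_range_comp_add_one [AddCommGroup R] {f : ℤ → R}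
    (hf : Periodic f N) : ∑ i ∈ range N, f (i + 1) = ∑ i ∈ range N, f i := by
  have htel := sum_range_sub (fun n : ℕ => f n) N
  rw [sum_sub_distrib, show f N = f 0 from hf.eq, Nat.cast_zero, sub_self, sub_eq_zero] at htel
  simpa using htel

variable [CommRing R] {f g : ℤ → R}

theorem Function.Periodic.sum_range_bwd_mul_bwd_eq_sum_fwd_mul_fwd (hf : Periodic f N)
    (hg : Periodic g N) :
    ∑ i ∈ range N, (f i - f (i - 1)) * (g i - g (i - 1)) =
      ∑ i ∈ range N, (f (i + 1) - f i) * (g (i + 1) - g i) := by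
  have hper : Periodic (fun i => (f i - f (i - 1)) * (g i - g (i - 1))) N :=
    (hf.sub (hf.sub_const 1)).mul (hg.sub (hg.sub_const 1))
  simpa using hper.sum_range_comp_add_one.symm

theorem Function.Periodic.sum_range_fwd_mul_fwd_eq_neg_sum_second_diff_mul (hf : Periodic f N)
    (hg : Periodic g N) :
    ∑ i ∈ range N, (f (i + 1) - f i) * (g (i + 1) - g i) =
      -∑ i ∈ range N, (f (i + 1) - 2 * f i + f (i - 1)) * g i := by
  have hper : Periodic (fun i => (f i - f (i - 1)) * g i) N :=
    (hf.sub (hf.sub_const 1)).mul hg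
  have hshift := hper.sum_range_comp_add_one
  simp only [add_sub_cancel_right] at hshift
  rw [eq_neg_iff_add_eq_zero, ← sum_add_distrib]
  calc _ = ∑ i ∈ range N, ((f (i + 1) - f i) * g (i + 1) - (f i - f (i - 1)) * g i) :=
        sum_congr rfl fun i _ => by ring
    _ = 0 := by rw [sum_sub_distrib, hshift, sub_self]

end SummationByParts

theorem Function.Periodic.sum_range_sq_diff_sub_sq_diff {R : Type*} [CommRing R] {N : ℕ}
    {V' V : ℤ → R} (hV' : Periodic V' N) (hV : Periodic V N) :
    ∑ i ∈ range N, ((V' (i + 1) - V' i) ^ 2 + (V' i - V' (i - 1)) ^ 2)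
        - ∑ i ∈ range N, ((V (i + 1) - V i) ^ 2 + (V i - V (i - 1)) ^ 2) =
      -2 * ∑ i ∈ range N,
        ((V' (i + 1) + V (i + 1)) - 2 * (V' i + V i) + (V' (i - 1) + V (i - 1))) * (V' i - V i) := by
  have hfwd := (hV'.add hV).sum_range_fwd_mul_fwd_eq_neg_sum_second_diff_mul (hV'.sub hV)
  have hbwd := (hV'.add hV).sum_range_bwd_mul_bwd_eq_sum_fwd_mul_fwd (hV'.sub hV)
  simp only [Pi.add_apply, Pi.sub_apply] at hfwd hbwd
  calc _ = ∑ i ∈ range N, ((V' (i + 1) + V (i + 1) - (V' i + V i)) *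
              (V' (i + 1) - V (i + 1) - (V' i - V i)) +
            (V' i + V i - (V' (i - 1) + V (i - 1))) * (V' i - V i - (V' (i - 1) - V (i - 1)))) := by
        rw [← sum_sub_distrib]
        exact sum_congr rfl fun i _ => by ring
    _ = _ := by rw [sum_add_distrib, hbwd, hfwd]; ring

theorem sq_div_add_sq_div_mul_self {K : Type*} [Field K] (a b h : K) :
    ((a / h) ^ 2 + (b / h) ^ 2) * h = (a ^ 2 + b ^ 2) / h := by
  rcases eq_or_ne h 0 with rfl | hh
  · simp
  · field_simp

theorem div_sq_div_add_mul_sq_sub_sq_mul {K : Type*} [Field K] {x y : K} (hxy : x + y ≠ 0)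
    (a h : K) : a / h ^ 2 / (x + y) * (x ^ 2 - y ^ 2) * h = a * (x - y) / h := by
  rcases eq_or_ne h 0 with rfl | hh
  · simp
  · field_simp
    ring

theorem stmt_17_general (N : ℕ) (h : ℝ)
    (V' V : ℤ → ℝ) (hV' : ∀ i : ℤ, V' (i + N) = V' i) (hV : ∀ i : ℤ, V (i + N) = V i)
    (hne : ∀ i : ℤ, V' i + V i ≠ 0) :
    (1/2) * ∑ i ∈ Finset.range N,
        (((V' (i+1) - V' i)/h)^2 + ((V' i - V' (i-1))/h)^2) * h
      - (1/2) * ∑ i ∈ Finset.range N,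
        (((V (i+1) - V i)/h)^2 + ((V i - V (i-1))/h)^2) * h =
    - ∑ i ∈ Finset.range N,
        ((((V' (i+1) + V (i+1)) - 2*(V' i + V i) + (V' (i-1) + V (i-1)))/h^2)
          / (V' i + V i)) * ((V' i)^2 - (V i)^2) * h := by
  simp only [sq_div_add_sq_div_mul_self, div_sq_div_add_mul_sq_sub_sq_mul (hne _), ← sum_div]
  linear_combination Periodic.sum_range_sq_diff_sub_sq_diff hV' hV / (2 * h)

/-- Discrete chain rule for the discrete Fisher information:
`V' = V^{k+1}`, `V = V^k` are `N`-periodic vectors, `U' = V'²`, `U = V²`,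
`F_d[U] = (1/2) Σᵢ ((δ⁺ᵢV)² + (δ⁻ᵢV)²) h`, and
`δ⟨2⟩ᵢ X = (X (i+1) - 2 X i + X (i-1))/h²`. -/
theorem stmt_17 (N : ℕ) (hN : 1 ≤ N) (h : ℝ) (hh : 0 < h) (hNh : (N:ℝ) * h = 1)
    (V' V : ℤ → ℝ) (hV' : ∀ i : ℤ, V' (i + N) = V' i) (hV : ∀ i : ℤ, V (i + N) = V i)
    (hne : ∀ i : ℤ, V' i + V i ≠ 0) :
    (1/2) * ∑ i ∈ Finset.range N,
        (((V' (i+1) - V' i)/h)^2 + ((V' i - V' (i-1))/h)^2) * h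
      - (1/2) * ∑ i ∈ Finset.range N,
        (((V (i+1) - V i)/h)^2 + ((V i - V (i-1))/h)^2) * h =
    - ∑ i ∈ Finset.range N,
        ((((V' (i+1) + V (i+1)) - 2*(V' i + V i) + (V' (i-1) + V (i-1)))/h^2)
          / (V' i + V i)) * ((V' i)^2 - (V i)^2) * h :=
  stmt_17_general N h V' V hV' hV hne
end
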